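/- Let Q ∈ ℝⁿˣⁿ be symmetric, c ∈ ℝⁿ, let I and J be finite disjoint index sets with centers μ_i ∈ ℝⁿ and radii r_i ≥ 0 for i ∈ I ∪ J, and let a₁, …, a_m ∈ ℝⁿ, b₁, …, b_m ∈ ℝ. Consider (VTRS): minimize xᵀQx + cᵀx over x ∈ ℝⁿ subject to ‖x − μ_i‖ ≤ r_i for i ∈ I, ‖x − μ_j‖ ≥ r_j for j ∈ J, and a_kᵀx ≤ b_k for k = 1, …, m; and its relaxation: minimize xᵀ(Q − λ_min(Q) I_n) x + cᵀx + λ_min(Q) t over (x, t) ∈ ℝⁿ × ℝ subject to t − 2 μ_iᵀx + ‖μ_i‖² ≤ r_i² for i ∈ I, t − 2 μ_jᵀx + ‖μ_j‖² ≥ r_j² for j ∈ J, a_kᵀx ≤ b_k for k = 1, …, m, and xᵀx ≤ t. Suppose the dimension of the span of span{a₁, …, a_m, μ_i (i ∈ I), μ_j (j ∈ J)} ∪ R(Q − λ_min(Q) I_n) is at most n − 1, and the optimal value of the relaxation is > −∞. Then x* is a global minimizer of (VTRS) if and only if (x*, x*ᵀx*) is a global minimizer of the relaxation. -/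

import Mathlib

/-!
Evaluated at `(x, xᵀx)` the relaxation is (VTRS) itself: `‖x - μ‖² = xᵀx - 2μᵀx + ‖μ‖²` and
`xᵀQx = xᵀ(Q - λI)x + λ xᵀx`. So it suffices that every relaxed-feasible `(x, t)` is dominated
by a point of (VTRS). The dimension bound yields `v ≠ 0` orthogonal to all `a_k`, all `μ_i` and
the range of the symmetric matrix `Q - λ_min I`, hence in its kernel; flipping its sign makes
`cᵀv ≤ 0`. Moving from `x` along `v` until `‖x + s v‖² = t` leaves every `a_kᵀx`, `μ_iᵀx` and
`xᵀ(Q - λ_min I)x` unchanged and does not increase `cᵀx`, so `x + s v` is feasible for (VTRS)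
with value at most the relaxed value of `(x, t)`.
-/

open Matrix

lemma sub_dotProduct_sub_self {ι R : Type*} [Fintype ι] [CommRing R] (x y : ι → R) :
    (x - y) ⬝ᵥ (x - y) = x ⬝ᵥ x - 2 * (y ⬝ᵥ x) + y ⬝ᵥ y := by
  simp only [sub_dotProduct, dotProduct_sub, dotProduct_comm x y]
  ring

lemma sqrt_sub_dotProduct_sub_le_iff {ι : Type*} [Fintype ι] (x μ : ι → ℝ) {r : ℝ}
    (hr : 0 ≤ r) :
    √((x - μ) ⬝ᵥ (x - μ)) ≤ r ↔ x ⬝ᵥ x - 2 * (μ ⬝ᵥ x) + μ ⬝ᵥ μ ≤ r ^ 2 := by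
  rw [Real.sqrt_le_left hr, sub_dotProduct_sub_self]

lemma le_sqrt_sub_dotProduct_sub_iff {ι : Type*} [Fintype ι] (x μ : ι → ℝ) {r : ℝ}
    (hr : 0 ≤ r) :
    r ≤ √((x - μ) ⬝ᵥ (x - μ)) ↔ r ^ 2 ≤ x ⬝ᵥ x - 2 * (μ ⬝ᵥ x) + μ ⬝ᵥ μ := by
  rw [Real.le_sqrt hr (by simpa using dotProduct_star_self_nonneg (x - μ)),
    sub_dotProduct_sub_self]

lemma dotProduct_sub_smul_one_mulVec {ι R : Type*} [Fintype ι] [DecidableEq ι] [CommRing R]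
    (Q : Matrix ι ι R) (l : R) (x : ι → R) :
    x ⬝ᵥ ((Q - l • 1) *ᵥ x) = x ⬝ᵥ (Q *ᵥ x) - l * (x ⬝ᵥ x) := by
  rw [sub_mulVec, smul_mulVec, one_mulVec, dotProduct_sub, dotProduct_smul, smul_eq_mul]

lemma exists_nonneg_mul_sq_add_mul_eq {q p d : ℝ} (hq : 0 < q) (hd : 0 ≤ d) :
    ∃ s, 0 ≤ s ∧ q * s ^ 2 + 2 * p * s = d := by
  have hD : 0 ≤ p ^ 2 + q * d := by positivity
  have hp : p ≤ √(p ^ 2 + q * d) :=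
    (le_abs_self p).trans (Real.abs_le_sqrt (by nlinarith))
  refine ⟨(√(p ^ 2 + q * d) - p) / q, div_nonneg (by linarith) hq.le, ?_⟩
  field_simp
  linear_combination Real.sq_sqrt hD

lemma exists_nonneg_dotProduct_self_add_smul_eq {ι : Type*} [Fintype ι] {x v : ι → ℝ}
    (hv : v ≠ 0) {t : ℝ} (ht : x ⬝ᵥ x ≤ t) :
    ∃ s : ℝ, 0 ≤ s ∧ (x + s • v) ⬝ᵥ (x + s • v) = t := by
  have hvv : 0 < v ⬝ᵥ v := by simpa using dotProduct_self_star_pos_iff.mpr hv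
  obtain ⟨s, hs, hst⟩ := exists_nonneg_mul_sq_add_mul_eq (p := x ⬝ᵥ v) hvv (sub_nonneg.mpr ht)
  refine ⟨s, hs, ?_⟩
  simp only [add_dotProduct, dotProduct_add, smul_dotProduct, dotProduct_smul, smul_eq_mul,
    dotProduct_comm v x]
  linear_combination hst

lemma exists_ne_zero_forall_dotProduct_eq_zero {ι : Type*} [Fintype ι] [DecidableEq ι]
    {K : Type*} [Field K] {S : Submodule K (ι → K)} (hS : Module.finrank K S < Fintype.card ι) :
    ∃ v ≠ 0, ∀ w ∈ S, w ⬝ᵥ v = 0 := by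
  have hlt : S < ⊤ := Submodule.lt_top_of_finrank_lt_finrank (by simpa using hS)
  obtain ⟨f, hf, hSf⟩ := Submodule.exists_dual_map_eq_bot_of_lt_top hlt inferInstance
  refine ⟨(dotProductEquiv K ι).symm f, by simpa using hf, fun w hw => ?_⟩
  have : f w = 0 := by simpa [hSf] using Submodule.mem_map_of_mem (f := f) hw
  rwa [dotProduct_comm, ← dotProductEquiv_apply_apply, LinearEquiv.apply_symm_apply]

lemma exists_ne_zero_forall_dotProduct_eq_zero_and_nonpos {ι K : Type*} [Fintype ι]
    [DecidableEq ι] [Field K] [LinearOrder K] [IsStrictOrderedRing K] {S : Submodule K (ι → K)}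
    (hS : Module.finrank K S < Fintype.card ι) (c : ι → K) : ∃ v ≠ 0, (∀ w ∈ S, w ⬝ᵥ v = 0) ∧ c ⬝ᵥ v ≤ 0 := by
  obtain ⟨v, hv, hvS⟩ := exists_ne_zero_forall_dotProduct_eq_zero hS
  rcases le_total (c ⬝ᵥ v) 0 with hc | hc
  · exact ⟨v, hv, hvS, hc⟩
  · refine ⟨-v, neg_ne_zero.mpr hv, fun w hw => ?_, ?_⟩ <;> simp [*]

lemma mulVec_eq_zero_of_forall_mulVec_dotProduct_eq_zero {ι R : Type*} [Fintype ι]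
    [DecidableEq ι] [CommSemiring R] {M : Matrix ι ι R} (hM : M.IsSymm) {v : ι → R}
    (h : ∀ u, (M *ᵥ u) ⬝ᵥ v = 0) : M *ᵥ v = 0 := by
  ext i
  have := h (Pi.single i 1)
  rwa [mulVec_single_one, ← hM, col_transpose] at this

lemma add_smul_dotProduct_mulVec_add_smul {ι R : Type*} [Fintype ι] [CommSemiring R]
    {M : Matrix ι ι R} (hM : M.IsSymm) {v : ι → R} (hv : M *ᵥ v = 0) (x : ι → R) (s : R) :
    (x + s • v) ⬝ᵥ (M *ᵥ (x + s • v)) = x ⬝ᵥ (M *ᵥ x) := by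
  have : v ⬝ᵥ (M *ᵥ x) = 0 := by
    rw [dotProduct_mulVec, ← mulVec_transpose, hM.eq, hv, zero_dotProduct]
  simp [mulVec_add, mulVec_smul, hv, add_dotProduct, smul_dotProduct, this]

lemma nonempty_of_bddAbove_posSemidef {ι : Type*} [Fintype ι] [DecidableEq ι]
    {Q : Matrix ι ι ℝ} (h : BddAbove {c : ℝ | (Q - c • (1 : Matrix ι ι ℝ)).PosSemidef}) :
    Nonempty ι := by
  by_contra hι
  rw [not_nonempty_iff] at hι
  obtain ⟨l, hl⟩ := h
  have hpsd : (Q - (l + 1) • 1).PosSemidef :=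
    ⟨Subsingleton.elim _ _, fun x => by simp [Subsingleton.elim x 0]⟩
  have : l + 1 ≤ l := hl hpsd
  linarith

theorem minimizer_iff_of_exact_relaxation {X : Type*} {F : X → Prop} {G : X → ℝ → Prop}
    {f : X → ℝ} {g : X → ℝ → ℝ} {N : X → ℝ} (hFG : ∀ x, F x ↔ G x (N x))
    (hfg : ∀ x, g x (N x) = f x) (hlift : ∀ x t, G x t → ∃ y, F y ∧ f y ≤ g x t) (xs : X) :
    (F xs ∧ ∀ x, F x → f xs ≤ f x) ↔ (G xs (N xs) ∧ ∀ x t, G x t → g xs (N xs) ≤ g x t) := by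
  constructor
  · rintro ⟨hxs, hmin⟩
    refine ⟨(hFG xs).1 hxs, fun x t hxt => ?_⟩
    obtain ⟨y, hy, hfy⟩ := hlift x t hxt
    rw [hfg]
    exact (hmin y hy).trans hfy
  · rintro ⟨hxs, hmin⟩
    refine ⟨(hFG xs).2 hxs, fun x hx => ?_⟩
    simpa only [hfg] using hmin x (N x) ((hFG x).1 hx)

namespace VTRS

variable {ι κ ν : Type*} [Fintype κ]

def Feasible (I J : Finset ι) (μ : ι → κ → ℝ) (r : ι → ℝ) (a : ν → κ → ℝ) (b : ν → ℝ)
    (x : κ → ℝ) : Prop :=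
  (∀ i ∈ I, √((x - μ i) ⬝ᵥ (x - μ i)) ≤ r i) ∧
    (∀ j ∈ J, r j ≤ √((x - μ j) ⬝ᵥ (x - μ j))) ∧ ∀ k, a k ⬝ᵥ x ≤ b k

def RelaxedFeasible (I J : Finset ι) (μ : ι → κ → ℝ) (r : ι → ℝ) (a : ν → κ → ℝ)
    (b : ν → ℝ) (x : κ → ℝ) (t : ℝ) : Prop :=
  (∀ i ∈ I, t - 2 * (μ i ⬝ᵥ x) + μ i ⬝ᵥ μ i ≤ r i ^ 2) ∧
    (∀ j ∈ J, r j ^ 2 ≤ t - 2 * (μ j ⬝ᵥ x) + μ j ⬝ᵥ μ j) ∧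
    (∀ k, a k ⬝ᵥ x ≤ b k) ∧ x ⬝ᵥ x ≤ t

variable {I J : Finset ι} {μ : ι → κ → ℝ} {r : ι → ℝ} {a : ν → κ → ℝ} {b : ν → ℝ}

lemma feasible_iff_relaxedFeasible (hr : ∀ i, (i ∈ I ∨ i ∈ J) → 0 ≤ r i) (x : κ → ℝ) :
    Feasible I J μ r a b x ↔ RelaxedFeasible I J μ r a b x (x ⬝ᵥ x) := by
  simp only [Feasible, RelaxedFeasible, le_refl, and_true]
  refine and_congr (forall₂_congr fun i hi => ?_) (and_congr (forall₂_congr fun j hj => ?_) .rfl)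
  · exact sqrt_sub_dotProduct_sub_le_iff x (μ i) (hr i (.inl hi))
  · exact le_sqrt_sub_dotProduct_sub_iff x (μ j) (hr j (.inr hj))

lemma RelaxedFeasible.add_smul {x v : κ → ℝ} {t s : ℝ} (h : RelaxedFeasible I J μ r a b x t)
    (hμI : ∀ i ∈ I, μ i ⬝ᵥ v = 0) (hμJ : ∀ j ∈ J, μ j ⬝ᵥ v = 0) (ha : ∀ k, a k ⬝ᵥ v = 0)
    (ht : (x + s • v) ⬝ᵥ (x + s • v) = t) :
    RelaxedFeasible I J μ r a b (x + s • v) t := by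
  obtain ⟨hI, hJ, hA, -⟩ := h
  refine ⟨fun i hi => ?_, fun j hj => ?_, fun k => ?_, ht.le⟩
  · simpa [dotProduct_add, hμI i hi] using hI i hi
  · simpa [dotProduct_add, hμJ j hj] using hJ j hj
  · simpa [dotProduct_add, ha k] using hA k

lemma exists_feasible_le_of_relaxedFeasible [DecidableEq κ] {Q : Matrix κ κ ℝ} {l : ℝ}
    {c v x : κ → ℝ} {t : ℝ} (hr : ∀ i, (i ∈ I ∨ i ∈ J) → 0 ≤ r i)
    (hQ : (Q - l • 1).IsSymm) (hv : v ≠ 0) (hQv : (Q - l • 1) *ᵥ v = 0) (hcv : c ⬝ᵥ v ≤ 0)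
    (hμI : ∀ i ∈ I, μ i ⬝ᵥ v = 0) (hμJ : ∀ j ∈ J, μ j ⬝ᵥ v = 0) (ha : ∀ k, a k ⬝ᵥ v = 0)
    (h : RelaxedFeasible I J μ r a b x t) :
    ∃ y, Feasible I J μ r a b y ∧
      y ⬝ᵥ (Q *ᵥ y) + c ⬝ᵥ y ≤ x ⬝ᵥ ((Q - l • 1) *ᵥ x) + c ⬝ᵥ x + l * t := by
  obtain ⟨s, hs, hst⟩ := exists_nonneg_dotProduct_self_add_smul_eq hv h.2.2.2
  have hfeas := h.add_smul hμI hμJ ha hst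
  rw [← hst, ← feasible_iff_relaxedFeasible hr] at hfeas
  refine ⟨x + s • v, hfeas, ?_⟩
  have hquad : (x + s • v) ⬝ᵥ (Q *ᵥ (x + s • v)) = x ⬝ᵥ ((Q - l • 1) *ᵥ x) + l * t := by
    rw [← add_smul_dotProduct_mulVec_add_smul hQ hQv x s, dotProduct_sub_smul_one_mulVec, hst]
    ring
  have hlin : c ⬝ᵥ (x + s • v) = c ⬝ᵥ x + s * (c ⬝ᵥ v) := by
    rw [dotProduct_add, dotProduct_smul, smul_eq_mul]
  rw [hquad, hlin]
  linarith [mul_nonpos_of_nonneg_of_nonpos hs hcv]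

end VTRS

theorem stmt12_general (n m : ℕ) {ι : Type*} (I J : Finset ι)
    (Q : Matrix (Fin n) (Fin n) ℝ) (lmin : ℝ)
    (hlmin : IsGreatest {c : ℝ | (Q - c • (1 : Matrix (Fin n) (Fin n) ℝ)).PosSemidef} lmin)
    (c : Fin n → ℝ) (μ : ι → Fin n → ℝ) (r : ι → ℝ)
    (hr : ∀ i, (i ∈ I ∨ i ∈ J) → 0 ≤ r i)
    (a : Fin m → Fin n → ℝ) (b : Fin m → ℝ)
    (hdim : Module.finrank ℝ
      ↥(Submodule.span ℝ (Set.range a ∪ (μ '' ↑I) ∪ (μ '' ↑J)) ⊔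
          LinearMap.range (Q - lmin • (1 : Matrix (Fin n) (Fin n) ℝ)).mulVecLin) ≤ n - 1)
    (xs : Fin n → ℝ) :
    -- `xs` globally solves (VTRS)
    ((((∀ i ∈ I, Real.sqrt ((xs - μ i) ⬝ᵥ (xs - μ i)) ≤ r i) ∧
        (∀ j ∈ J, r j ≤ Real.sqrt ((xs - μ j) ⬝ᵥ (xs - μ j))) ∧
        (∀ k, a k ⬝ᵥ xs ≤ b k)) ∧
      (∀ x : Fin n → ℝ,
        ((∀ i ∈ I, Real.sqrt ((x - μ i) ⬝ᵥ (x - μ i)) ≤ r i) ∧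
          (∀ j ∈ J, r j ≤ Real.sqrt ((x - μ j) ⬝ᵥ (x - μ j))) ∧
          (∀ k, a k ⬝ᵥ x ≤ b k)) →
        xs ⬝ᵥ (Q *ᵥ xs) + c ⬝ᵥ xs ≤ x ⬝ᵥ (Q *ᵥ x) + c ⬝ᵥ x))) ↔
    -- `(xs, xsᵀxs)` globally solves the relaxation
    (((∀ i ∈ I, xs ⬝ᵥ xs - 2 * (μ i ⬝ᵥ xs) + μ i ⬝ᵥ μ i ≤ (r i) ^ 2) ∧
        (∀ j ∈ J, (r j) ^ 2 ≤ xs ⬝ᵥ xs - 2 * (μ j ⬝ᵥ xs) + μ j ⬝ᵥ μ j) ∧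
        (∀ k, a k ⬝ᵥ xs ≤ b k) ∧ xs ⬝ᵥ xs ≤ xs ⬝ᵥ xs) ∧
      (∀ (x : Fin n → ℝ) (t : ℝ),
        ((∀ i ∈ I, t - 2 * (μ i ⬝ᵥ x) + μ i ⬝ᵥ μ i ≤ (r i) ^ 2) ∧
          (∀ j ∈ J, (r j) ^ 2 ≤ t - 2 * (μ j ⬝ᵥ x) + μ j ⬝ᵥ μ j) ∧
          (∀ k, a k ⬝ᵥ x ≤ b k) ∧ x ⬝ᵥ x ≤ t) →
        xs ⬝ᵥ ((Q - lmin • (1 : Matrix (Fin n) (Fin n) ℝ)) *ᵥ xs) + c ⬝ᵥ xs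
            + lmin * (xs ⬝ᵥ xs) ≤
          x ⬝ᵥ ((Q - lmin • (1 : Matrix (Fin n) (Fin n) ℝ)) *ᵥ x) + c ⬝ᵥ x
            + lmin * t)) := by
  set M := Q - lmin • (1 : Matrix (Fin n) (Fin n) ℝ)
  have hM : M.IsSymm := isHermitian_iff_isSymm.mp hlmin.1.isHermitian
  -- `n - 1` truncates at `n = 0`; there every `c` makes `Q - c • 1` positive semidefinite.
  have hn : 0 < n := Fin.pos_iff_nonempty.mpr (nonempty_of_bddAbove_posSemidef hlmin.bddAbove)
  obtain ⟨v, hv, hvS, hcv⟩ := exists_ne_zero_forall_dotProduct_eq_zero_and_nonpos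
    (hdim.trans_lt (by rw [Fintype.card_fin]; omega)) c
  have hvspan : ∀ w ∈ Set.range a ∪ μ '' I ∪ μ '' J, w ⬝ᵥ v = 0 := fun w hw =>
    hvS w (Submodule.mem_sup_left (Submodule.subset_span hw))
  have hMv : M *ᵥ v = 0 := mulVec_eq_zero_of_forall_mulVec_dotProduct_eq_zero hM
    fun u => hvS _ (Submodule.mem_sup_right ⟨u, rfl⟩)
  exact minimizer_iff_of_exact_relaxation (F := VTRS.Feasible I J μ r a b)
    (G := VTRS.RelaxedFeasible I J μ r a b) (f := fun x => x ⬝ᵥ (Q *ᵥ x) + c ⬝ᵥ x)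
    (g := fun x t => x ⬝ᵥ (M *ᵥ x) + c ⬝ᵥ x + lmin * t) (N := fun x => x ⬝ᵥ x)
    (VTRS.feasible_iff_relaxedFeasible hr)
    (fun x => by simp only [M, dotProduct_sub_smul_one_mulVec]; ring)
    (fun x t => VTRS.exists_feasible_le_of_relaxedFeasible hr hM hv hMv hcv
      (fun i hi => hvspan _ (.inl (.inr ⟨i, hi, rfl⟩))) (fun j hj => hvspan _ (.inr ⟨j, hj, rfl⟩))
      (fun k => hvspan _ (.inl (.inl ⟨k, rfl⟩))))
    xs

/-- equivalence of global minimizers of the variant trust region problem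
(VTRS), with inside-ball, outside-ball and linear constraints, and its convex
relaxation, under the dimension condition. `lmin` is the smallest eigenvalue of `Q`. -/
theorem stmt12 (n m : ℕ) {ι : Type*} (I J : Finset ι) (hIJ : Disjoint I J)
    (Q : Matrix (Fin n) (Fin n) ℝ) (hQsymm : Q.IsSymm) (lmin : ℝ)
    (hlmin : IsGreatest {c : ℝ | (Q - c • (1 : Matrix (Fin n) (Fin n) ℝ)).PosSemidef} lmin)
    (c : Fin n → ℝ) (μ : ι → Fin n → ℝ) (r : ι → ℝ)
    (hr : ∀ i, (i ∈ I ∨ i ∈ J) → 0 ≤ r i)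
    (a : Fin m → Fin n → ℝ) (b : Fin m → ℝ)
    (hdim : Module.finrank ℝ
      ↥(Submodule.span ℝ (Set.range a ∪ (μ '' ↑I) ∪ (μ '' ↑J)) ⊔
          LinearMap.range (Q - lmin • (1 : Matrix (Fin n) (Fin n) ℝ)).mulVecLin) ≤ n - 1)
    (hval : sInf ((fun q : (Fin n → ℝ) × ℝ =>
        ((q.1 ⬝ᵥ ((Q - lmin • (1 : Matrix (Fin n) (Fin n) ℝ)) *ᵥ q.1) + c ⬝ᵥ q.1
            + lmin * q.2 : ℝ) : EReal)) ''
      {q | (∀ i ∈ I, q.2 - 2 * (μ i ⬝ᵥ q.1) + μ i ⬝ᵥ μ i ≤ (r i) ^ 2) ∧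
           (∀ j ∈ J, (r j) ^ 2 ≤ q.2 - 2 * (μ j ⬝ᵥ q.1) + μ j ⬝ᵥ μ j) ∧
           (∀ k, a k ⬝ᵥ q.1 ≤ b k) ∧ q.1 ⬝ᵥ q.1 ≤ q.2}) ≠ ⊥)
    (xs : Fin n → ℝ) :
    -- `xs` globally solves (VTRS)
    ((((∀ i ∈ I, Real.sqrt ((xs - μ i) ⬝ᵥ (xs - μ i)) ≤ r i) ∧
        (∀ j ∈ J, r j ≤ Real.sqrt ((xs - μ j) ⬝ᵥ (xs - μ j))) ∧
        (∀ k, a k ⬝ᵥ xs ≤ b k)) ∧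
      (∀ x : Fin n → ℝ,
        ((∀ i ∈ I, Real.sqrt ((x - μ i) ⬝ᵥ (x - μ i)) ≤ r i) ∧
          (∀ j ∈ J, r j ≤ Real.sqrt ((x - μ j) ⬝ᵥ (x - μ j))) ∧
          (∀ k, a k ⬝ᵥ x ≤ b k)) →
        xs ⬝ᵥ (Q *ᵥ xs) + c ⬝ᵥ xs ≤ x ⬝ᵥ (Q *ᵥ x) + c ⬝ᵥ x))) ↔
    -- `(xs, xsᵀxs)` globally solves the relaxation
    (((∀ i ∈ I, xs ⬝ᵥ xs - 2 * (μ i ⬝ᵥ xs) + μ i ⬝ᵥ μ i ≤ (r i) ^ 2) ∧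
        (∀ j ∈ J, (r j) ^ 2 ≤ xs ⬝ᵥ xs - 2 * (μ j ⬝ᵥ xs) + μ j ⬝ᵥ μ j) ∧
        (∀ k, a k ⬝ᵥ xs ≤ b k) ∧ xs ⬝ᵥ xs ≤ xs ⬝ᵥ xs) ∧
      (∀ (x : Fin n → ℝ) (t : ℝ),
        ((∀ i ∈ I, t - 2 * (μ i ⬝ᵥ x) + μ i ⬝ᵥ μ i ≤ (r i) ^ 2) ∧
          (∀ j ∈ J, (r j) ^ 2 ≤ t - 2 * (μ j ⬝ᵥ x) + μ j ⬝ᵥ μ j) ∧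
          (∀ k, a k ⬝ᵥ x ≤ b k) ∧ x ⬝ᵥ x ≤ t) →
        xs ⬝ᵥ ((Q - lmin • (1 : Matrix (Fin n) (Fin n) ℝ)) *ᵥ xs) + c ⬝ᵥ xs
            + lmin * (xs ⬝ᵥ xs) ≤
          x ⬝ᵥ ((Q - lmin • (1 : Matrix (Fin n) (Fin n) ℝ)) *ᵥ x) + c ⬝ᵥ x
            + lmin * t)) :=
  stmt12_general n m I J Q lmin hlmin c μ r hr a b hdim xs
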